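/- The map ad(x₁) : ψ ↦ [x₁, ψ] from the completed free Lie algebra (in weights ≥ 2) to 𝔱𝔪₁ is a Lie algebra homomorphism when the source carries the Ihara bracket {φ, ψ} := d_{[x₁,φ]}(ψ) − d_{[x₁,ψ]}(φ) + [φ, ψ] and the target carries {−,−}₁: explicitly, for all ψ₁, ψ₂ ∈ 𝔉₂^{≥2}, [x₁, {ψ₁, ψ₂}] = { [x₁,ψ₁], [x₁,ψ₂] }₁. -/
import Mathlib


/-- Words in the letters x₀, x₁ (0 ↦ x₀, 1 ↦ x₁). -/
abbrev W : Type := List (Fin 2)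

/-- 𝔥^∨ = ℚ⟨⟨x₀,x₁⟩⟩, the completed free associative ℚ-algebra on x₀, x₁, realized
as the space of coefficient functions on words; `Φ w` is the coefficient ⟨Φ | w⟩. -/
abbrev NC : Type := W → ℚ

/-- The generator x₀ as a series. -/
def x0 : NC := fun w => if w = [(0 : Fin 2)] then 1 else 0

/-- The generator x₁ as a series. -/
def x1 : NC := fun w => if w = [(1 : Fin 2)] then 1 else 0

/-- The unit 1 of ℚ⟨⟨x₀,x₁⟩⟩. -/
def nc1 : NC := fun w => if w = [] then 1 else 0

/-- The (concatenation) product of series: ⟨f·g | w⟩ = Σ_{w = uv} ⟨f|u⟩⟨g|v⟩. -/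
def cmul (f g : NC) : NC := fun w =>
  ∑ i ∈ Finset.range (w.length + 1), f (w.take i) * g (w.drop i)

/-- Shuffle of two words, as a list of words with multiplicity. -/
def sh : W → W → List W
  | [], v => [v]
  | u, [] => [u]
  | a :: u, b :: v =>
      ((sh u (b :: v)).map (a :: ·)) ++ ((sh (a :: u) v).map (b :: ·))
termination_by u v => u.length + v.length

/-- ⟨Φ | u ⧢ v⟩, the pairing of Φ with the shuffle of the words u and v. -/
def shPair (Φ : NC) (u v : W) : ℚ := ((sh u v).map Φ).sum

/-- Ψ is primitive for the shuffle coproduct: Δ_⧢(Ψ) = Ψ ⊗ 1 + 1 ⊗ Ψ, i.e.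
the (u,v)-coefficient ⟨Ψ | u ⧢ v⟩ of Δ_⧢(Ψ) equals that of Ψ ⊗ 1 + 1 ⊗ Ψ. -/
def primitiveSh (Ψ : NC) : Prop :=
  ∀ u v : W,
    shPair Ψ u v = Ψ u * (if v = [] then 1 else 0) + (if u = [] then 1 else 0) * Ψ v

/-- d_Ψ(Φ), where d_Ψ is the continuous derivation of ℚ⟨⟨x₀,x₁⟩⟩ with d_Ψ(x₀) = 0 and
d_Ψ(x₁) = Ψ: the coefficient at w sums, over all ways of writing w = u m v so that
u x₁ v is a word and m replaces that occurrence of x₁, the value ⟨Φ | u x₁ v⟩⟨Ψ | m⟩. -/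
def der (Ψ Φ : NC) : NC := fun w =>
  ∑ a ∈ Finset.range (w.length + 1), ∑ b ∈ Finset.range (w.length + 1 - a),
    Φ (w.take a ++ (1 : Fin 2) :: w.drop (a + b)) * Ψ ((w.drop a).take b)

/-- The bracket {Ψ₁, Ψ₂}₁ = d_{Ψ₁}(Ψ₂) − d_{Ψ₂}(Ψ₁). -/
def br (Ψ₁ Ψ₂ : NC) : NC := der Ψ₁ Ψ₂ - der Ψ₂ Ψ₁

/-- Membership in 𝔱𝔪₁: ⟨Ψ | x₁⟩ = 0 and ⟨Ψ | x₀^l⟩ = 0 for all l ≥ 0. -/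
def tm1mem (Ψ : NC) : Prop :=
  Ψ [(1 : Fin 2)] = 0 ∧ ∀ l : ℕ, Ψ (List.replicate l (0 : Fin 2)) = 0

/-- The commutator [a, b] = ab − ba in ℚ⟨⟨x₀,x₁⟩⟩. -/
def lieb (a b : NC) : NC := cmul a b - cmul b a

/-- The Ihara bracket {φ, ψ} = d_{[x₁,φ]}(ψ) − d_{[x₁,ψ]}(φ) + [φ, ψ]. -/
def ihara (φ ψ : NC) : NC := der (lieb x1 φ) ψ - der (lieb x1 ψ) φ + lieb φ ψ

open Finset

lemma tri (n : ℕ) (F : ℕ → ℕ → ℚ) :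
    ∑ j ∈ range (n+1), ∑ b ∈ range (j+1), F j b
      = ∑ b ∈ range (n+1), ∑ i ∈ range (n+1-b), F (b+i) b := by
  induction n with
  | zero => simp
  | succ n ih =>
    rw [Finset.sum_range_succ, ih,
      Finset.sum_range_succ (fun b => ∑ i ∈ range (n+1+1-b), F (b+i) b)]
    have h1 : ∀ b ∈ range (n+1), ∑ i ∈ range (n+1+1-b), F (b+i) b
        = ∑ i ∈ range (n+1-b), F (b+i) b + F (n+1) b := by
      intro b hb
      rw [Finset.mem_range] at hb
      rw [show n+1+1-b = (n+1-b)+1 by omega, Finset.sum_range_succ]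
      congr 2
      omega
    rw [Finset.sum_congr rfl h1, Finset.sum_add_distrib,
      show n+1+1-(n+1) = 1 by omega]
    simp [Finset.sum_range_succ]
    ring

lemma cmul_cons (f g : NC) (x : Fin 2) (w : W) :
    cmul f g (x :: w) = f [] * g (x :: w) + cmul (fun u => f (x :: u)) g w := by
  unfold cmul
  rw [show (x::w).length = w.length + 1 from rfl, Finset.sum_range_succ']
  simp [List.take_succ_cons, List.drop_succ_cons]
  ring

def D0 (Ψ Φ : NC) : NC := fun v =>
  ∑ b ∈ Finset.range (v.length + 1), Φ ((1 : Fin 2) :: v.drop b) * Ψ (v.take b)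

lemma der_nil (Ψ Φ : NC) : der Ψ Φ [] = Φ [(1 : Fin 2)] * Ψ [] := by
  simp [der]

lemma D0_nil (Ψ Φ : NC) : D0 Ψ Φ [] = Φ [(1 : Fin 2)] * Ψ [] := by
  simp [D0]

lemma der_cons (Ψ Φ : NC) (x : Fin 2) (w : W) :
    der Ψ Φ (x :: w) = D0 Ψ Φ (x :: w) + der Ψ (fun u => Φ (x :: u)) w := by
  unfold der D0
  rw [show (x::w).length = w.length + 1 from rfl, Finset.sum_range_succ']
  have h : ∀ a ∈ range (w.length + 1),
      ∑ b ∈ range (w.length + 1 + 1 - (a+1)),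
        Φ ((x::w).take (a+1) ++ (1:Fin 2) :: (x::w).drop (a+1+b)) * Ψ (((x::w).drop (a+1)).take b)
      = ∑ b ∈ range (w.length + 1 - a),
        Φ (x :: (w.take a ++ (1:Fin 2) :: w.drop (a+b))) * Ψ ((w.drop a).take b) := by
    intro a _
    rw [show w.length + 1 + 1 - (a+1) = w.length + 1 - a by omega]
    apply Finset.sum_congr rfl
    intro b _
    rw [show a+1+b = (a+b)+1 by omega]
    simp [List.take_succ_cons, List.drop_succ_cons]
  rw [Finset.sum_congr rfl h, add_comm]
  congr 1
  simp

lemma D0_cmul (Ψ f g : NC) (v : W) :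
    D0 Ψ (cmul f g) v = cmul (D0 Ψ f) g v + f [] * D0 Ψ g v := by
  unfold D0 cmul
  have L : ∀ b ∈ range (v.length + 1),
      (∑ i ∈ range (((1 : Fin 2) :: v.drop b).length + 1),
        f (((1:Fin 2) :: v.drop b).take i) * g (((1:Fin 2) :: v.drop b).drop i)) * Ψ (v.take b)
      = (∑ i ∈ range (v.length + 1 - b),
          f ((1:Fin 2) :: (v.drop b).take i) * g (v.drop (b+i)) * Ψ (v.take b))
        + f [] * (g ((1:Fin 2) :: v.drop b) * Ψ (v.take b)) := by
    intro b hb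
    rw [Finset.mem_range] at hb
    rw [show ((1:Fin 2) :: v.drop b).length + 1 = (v.length - b) + 1 + 1 by
      simp [List.length_drop], Finset.sum_range_succ']
    rw [show v.length - b + 1 = v.length + 1 - b by omega]
    simp only [List.take_succ_cons, List.drop_succ_cons, List.take_zero, List.drop_zero]
    rw [add_mul, Finset.sum_mul]
    congr 1
    · apply Finset.sum_congr rfl; intro i _
      rw [List.drop_drop]
    · ring
  rw [Finset.sum_congr rfl L, Finset.sum_add_distrib, ← Finset.mul_sum]
  congr 1
  have R : ∀ j ∈ range (v.length + 1),
      (∑ b ∈ range ((v.take j).length + 1), f ((1:Fin 2) :: (v.take j).drop b) * Ψ ((v.take j).take b))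
        * g (v.drop j)
      = ∑ b ∈ range (j+1), f ((1:Fin 2) :: (v.take j).drop b) * Ψ ((v.take j).take b) * g (v.drop j) := by
    intro j hj
    rw [Finset.mem_range] at hj
    rw [show (v.take j).length = j by simp [List.length_take]; omega, Finset.sum_mul]
  rw [Finset.sum_congr rfl R,
    tri v.length (fun j b => f ((1:Fin 2) :: (v.take j).drop b) * Ψ ((v.take j).take b) * g (v.drop j))]
  apply Finset.sum_congr rfl
  intro b _
  apply Finset.sum_congr rfl
  intro i _
  rw [List.drop_take, List.take_take, show b+i-b = i by omega, show b ⊓ (b+i) = b by omega]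
  ring

lemma der_comb (Ψ A B : NC) (c : ℚ) (w : W) :
    der Ψ (fun u => c * A u + B u) w = c * der Ψ A w + der Ψ B w := by
  simp [der, add_mul, mul_assoc, Finset.sum_add_distrib, Finset.mul_sum]

lemma der_cmul_pt (Ψ : NC) (w : W) :
    ∀ f g : NC, der Ψ (cmul f g) w = cmul (der Ψ f) g w + cmul f (der Ψ g) w := by
  induction w with
  | nil =>
    intro f g
    simp [der_nil, cmul, Finset.sum_range_succ]
    ring
  | cons x w ih =>
    intro f g
    rw [der_cons, cmul_cons (der Ψ f) g, cmul_cons f (der Ψ g)]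
    have hc : (fun u => cmul f g (x :: u))
        = fun u => f [] * g (x::u) + cmul (fun u' => f (x::u')) g u := by
      funext u; rw [cmul_cons]
    rw [hc, der_comb Ψ (fun u => g (x::u)) (cmul (fun u' => f (x::u')) g) (f []) w,
      ih (fun u => f (x::u)) g, der_cons Ψ g x w]
    have hd : (fun u => der Ψ f (x :: u))
        = fun u => D0 Ψ f (x::u) + der Ψ (fun u' => f (x::u')) u := by
      funext u; rw [der_cons]
    rw [hd]
    have hadd : cmul (fun u => D0 Ψ f (x::u) + der Ψ (fun u' => f (x::u')) u) g w
        = cmul (fun u => D0 Ψ f (x::u)) g w + cmul (der Ψ (fun u' => f (x::u'))) g w := by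
      simp [cmul, add_mul, Finset.sum_add_distrib]
    rw [hadd, D0_cmul, cmul_cons (D0 Ψ f) g, D0_nil, der_nil]
    ring

lemma der_cmul (Ψ f g : NC) :
    der Ψ (cmul f g) = cmul (der Ψ f) g + cmul f (der Ψ g) := by
  funext w; exact der_cmul_pt Ψ w f g

lemma D0_x1 (Ψ : NC) (v : W) : D0 Ψ x1 v = Ψ v := by
  unfold D0 x1
  rw [Finset.sum_eq_single v.length]
  · simp [List.drop_length]
  · intro b hb hne
    rw [Finset.mem_range] at hb
    have : v.drop b ≠ [] := by
      intro h
      have := congrArg List.length h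
      simp [List.length_drop] at this
      omega
    rw [if_neg (by simp [this]), zero_mul]
  · intro h
    exact absurd (Finset.mem_range.2 (by omega)) h

lemma der_x1 (Ψ : NC) : der Ψ x1 = Ψ := by
  funext w
  cases w with
  | nil => rw [der_nil]; simp [x1]
  | cons x w =>
    rw [der_cons, D0_x1]
    have : der Ψ (fun u => x1 (x :: u)) w = 0 := by
      simp [der, x1]
    rw [this, add_zero]

lemma cmul_assoc (f g h : NC) : cmul (cmul f g) h = cmul f (cmul g h) := by
  funext v
  unfold cmul
  have L : ∀ j ∈ range (v.length+1),
      (∑ i ∈ range ((v.take j).length + 1), f ((v.take j).take i) * g ((v.take j).drop i)) * h (v.drop j)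
      = ∑ i ∈ range (j+1), f (v.take i) * g ((v.drop i).take (j - i)) * h (v.drop j) := by
    intro j hj; rw [Finset.mem_range] at hj
    rw [show (v.take j).length = j by simp [List.length_take]; omega, Finset.sum_mul]
    apply Finset.sum_congr rfl; intro i hi; rw [Finset.mem_range] at hi
    rw [List.take_take, List.drop_take, show i ⊓ j = i by omega]
  rw [Finset.sum_congr rfl L,
    tri v.length (fun j i => f (v.take i) * g ((v.drop i).take (j-i)) * h (v.drop j))]
  apply Finset.sum_congr rfl; intro i hi; rw [Finset.mem_range] at hi
  rw [Finset.mul_sum, show (v.drop i).length = v.length - i by simp [List.length_drop],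
    show v.length - i + 1 = v.length + 1 - i by omega]
  apply Finset.sum_congr rfl; intro k _
  rw [List.drop_drop, show i + k - i = k by omega]
  ring

lemma der_sub (Ψ f g : NC) : der Ψ (f - g) = der Ψ f - der Ψ g := by
  funext w
  simp [der, Pi.sub_apply, sub_mul, Finset.sum_sub_distrib]

lemma cmul_sub_left (f g h : NC) : cmul (f - g) h = cmul f h - cmul g h := by
  funext w; simp [cmul, Pi.sub_apply, sub_mul, Finset.sum_sub_distrib]

lemma cmul_sub_right (f g h : NC) : cmul f (g - h) = cmul f g - cmul f h := by
  funext w; simp [cmul, Pi.sub_apply, mul_sub, Finset.sum_sub_distrib]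

lemma cmul_add_left (f g h : NC) : cmul (f + g) h = cmul f h + cmul g h := by
  funext w; simp [cmul, Pi.add_apply, add_mul, Finset.sum_add_distrib]

lemma cmul_add_right (f g h : NC) : cmul f (g + h) = cmul f g + cmul f h := by
  funext w; simp [cmul, Pi.add_apply, mul_add, Finset.sum_add_distrib]


/-- ad(x₁) : ψ ↦ [x₁, ψ] is a Lie algebra homomorphism from (𝔉₂^{≥2}, Ihara bracket)
to (𝔱𝔪₁, {−,−}₁): for all ψ₁, ψ₂ ∈ 𝔉₂^{≥2},
[x₁, {ψ₁, ψ₂}] = { [x₁,ψ₁], [x₁,ψ₂] }₁. -/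
theorem ad_x1_lie_hom (ψ₁ ψ₂ : NC)
    (h₁ : primitiveSh ψ₁) (h₁' : ∀ w : W, w.length ≤ 1 → ψ₁ w = 0)
    (h₂ : primitiveSh ψ₂) (h₂' : ∀ w : W, w.length ≤ 1 → ψ₂ w = 0) :
    lieb x1 (ihara ψ₁ ψ₂) = br (lieb x1 ψ₁) (lieb x1 ψ₂) := by
  simp only [br, ihara, lieb]
  simp only [der_sub, der_cmul, der_x1, cmul_sub_left, cmul_sub_right,
    cmul_add_left, cmul_add_right, cmul_assoc]
  abel
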